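/- Let $G$ be a totally disconnected locally compact group and $(\pi, V)$ a smooth admissible representation of $G$ over $\mathbb{C}$. Let $\|\cdot\|$ be a norm on $V$ with respect to which $\pi$ is continuous, and let $(\widetilde\pi, \widetilde V)$ denote the extension of $\pi$ to the completion of $V$ with respect to this norm. Then every non-zero closed $G$-invariant subspace of $\widetilde V$ intersects $V$ non-trivially; moreover, $(\pi, V)$ is algebraically irreducible if and only if $(\widetilde\pi, \widetilde V)$ is topologically irreducible. -/

import Mathlib

/-!
By smoothness the orbit of `v ∈ V` under a compact subgroup `K` is finite, so averaging `π` over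
finitely many elements of `K` sends `v` into `V^K`, which is finite-dimensional by admissibility.
The Baire category theorem bounds `‖π̃ g‖ ≤ C` near `1`, and by van Dantzig `K` can be taken
compact open inside that neighbourhood and fixing any given vector of `V`. The same average,
applied to `w` in the completion, lands within `C ‖w - v‖` of `V^K`.

If `0 ≠ w` lies in a closed invariant `W`, let `K` fix some `v₀ ∈ V` close to `w`. The averages of
`w` lie in `W`, within `‖w‖ / 2` of `w`, and arbitrarily close to `V^K`; compactness of bounded
parts of `V^K` yields a vector of `W ∩ V^K` within `‖w‖ / 2` of `w`, hence non-zero. If `v ∈ V` is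
in the closure of an invariant `U ≤ V`, let `K` fix `v`: averaging approximants from `U` gives
vectors of the finite-dimensional, hence closed, `U ⊓ V^K` converging to `v`, so `v ∈ U`. The two
directions of the irreducibility statement follow from these two facts.
-/

open UniformSpace

noncomputable section

namespace SmoothRep

variable {G : Type} [Group G] [TopologicalSpace G] [IsTopologicalGroup G]
  [LocallyCompactSpace G] [TotallyDisconnectedSpace G]
  {V : Type} [NormedAddCommGroup V] [NormedSpace ℂ V]

/-- The submodule of `K`-fixed vectors of a representation. -/
def fixedSubmodule (π : Representation ℂ G V) (K : Subgroup G) : Submodule ℂ V where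
  carrier := {v : V | ∀ k ∈ K, π k v = v}
  add_mem' := by
    intro a b ha hb k hk
    simp [map_add, ha k hk, hb k hk]
  zero_mem' := by
    intro k hk
    simp
  smul_mem' := by
    intro c v hv k hk
    simp [map_smul, hv k hk]

/-- A representation is smooth if every vector has open stabiliser. -/
def IsSmooth (π : Representation ℂ G V) : Prop :=
  ∀ v : V, IsOpen {g : G | π g v = v}

/-- A representation is admissible if the fixed vectors of every compact open subgroup form a
finite-dimensional subspace. -/
def IsAdmissible (π : Representation ℂ G V) : Prop :=
  ∀ K : Subgroup G, IsCompact (K : Set G) → IsOpen (K : Set G) →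
    FiniteDimensional ℂ (fixedSubmodule π K)

/-- `(π, V)` is algebraically irreducible: it has no invariant subspace other than `⊥`, `⊤`. -/
def AlgIrreducible (π : Representation ℂ G V) : Prop :=
  ∀ U : Submodule ℂ V, (∀ g : G, ∀ v ∈ U, π g v ∈ U) → U = ⊥ ∨ U = ⊤

end SmoothRep

open Set Filter Topology Metric

section TopologicalGroup

variable {H : Type*} [Group H] [TopologicalSpace H] [IsTopologicalGroup H]

/-- van Dantzig's theorem. -/
theorem IsTopologicalGroup.exists_isCompact_isOpen_subgroup_subset [LocallyCompactSpace H]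
    [TotallyDisconnectedSpace H] {U : Set H} (hU : U ∈ 𝓝 1) :
    ∃ K : Subgroup H, IsCompact (K : Set H) ∧ IsOpen (K : Set H) ∧ (K : Set H) ⊆ U := by
  obtain ⟨S, hS, hS1⟩ := exists_compact_mem_nhds (1 : H)
  obtain ⟨W, hWclopen, hW1, hWUS⟩ :=
    loc_compact_Haus_tot_disc_of_zero_dim.mem_nhds_iff.mp (inter_mem hU hS1)
  have hWc : IsCompact W := hS.of_isClosed_subset hWclopen.isClosed (hWUS.trans inter_subset_right)
  obtain ⟨V, hV, hWV⟩ := compact_open_separated_mul_right hWc hWclopen.isOpen subset_rfl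
  set K := Subgroup.closure (V ∩ V⁻¹)
  have hKo : IsOpen (K : Set H) :=
    K.isOpen_of_mem_nhds (mem_of_superset (inter_mem hV (inv_mem_nhds_one H hV))
      Subgroup.subset_closure)
  have hKW : (K : Set H) ⊆ W := by
    intro k hk
    suffices ∀ w ∈ W, w * k ∈ W by simpa using this 1 hW1
    induction hk using Subgroup.closure_induction'' with
    | mem x hx => exact fun w hw => hWV (Set.mul_mem_mul hw hx.1)
    | inv_mem x hx => exact fun w hw => hWV (Set.mul_mem_mul hw hx.2)
    | one => simp
    | mul x y _ _ hx hy => exact fun w hw => by simpa [mul_assoc] using hy _ (hx w hw)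
  exact ⟨K, hWc.of_isClosed_subset (K.isClosed_of_isOpen hKo) hKW, hKo,
    hKW.trans (hWUS.trans inter_subset_left)⟩

/-- The closed sets `{g | ‖T g‖ ≤ n}` cover `H`, so by Baire one of them has an interior point
`g₀`; translating by `g₀⁻¹` costs only the factor `‖T g₀⁻¹‖`. -/
theorem exists_mem_nhds_one_forall_norm_le [BaireSpace H] {A : Type*} [SeminormedRing A]
    (T : H → A) (hmul : ∀ g h, T (g * h) = T g * T h)
    (hT : ∀ n : ℕ, IsClosed {g | ‖T g‖ ≤ n}) :
    ∃ U ∈ 𝓝 (1 : H), ∃ C, ∀ g ∈ U, ‖T g‖ ≤ C := by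
  obtain ⟨n, g₀, hg₀⟩ := nonempty_interior_of_iUnion_of_closed hT
    (Set.iUnion_eq_univ_iff.2 fun g => exists_nat_ge ‖T g‖)
  refine ⟨(g₀ * ·) ⁻¹' interior {g | ‖T g‖ ≤ n},
    (isOpen_interior.preimage (continuous_const_mul g₀)).mem_nhds (by simpa using hg₀),
    ‖T g₀⁻¹‖ * n, fun g hg => ?_⟩
  calc ‖T g‖ = ‖T g₀⁻¹ * T (g₀ * g)‖ := by rw [← hmul, inv_mul_cancel_left]
    _ ≤ ‖T g₀⁻¹‖ * ‖T (g₀ * g)‖ := norm_mul_le _ _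
    _ ≤ ‖T g₀⁻¹‖ * n := by gcongr; exact interior_subset (s := {g | ‖T g‖ ≤ n}) hg

end TopologicalGroup

section Average

variable {𝕜 E ι : Type*} [RCLike 𝕜] [NormedAddCommGroup E] [NormedSpace 𝕜 E]

def finsetAverage (T : ι → E →L[𝕜] E) (s : Finset ι) : E →L[𝕜] E :=
  (s.card : 𝕜)⁻¹ • ∑ i ∈ s, T i

variable {T : ι → E →L[𝕜] E} {s : Finset ι}

theorem finsetAverage_apply (x : E) :
    finsetAverage T s x = (s.card : 𝕜)⁻¹ • ∑ i ∈ s, T i x := by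
  simp [finsetAverage]

theorem norm_finsetAverage_le (hs : s.Nonempty) {C : ℝ} (hT : ∀ i ∈ s, ‖T i‖ ≤ C) :
    ‖finsetAverage T s‖ ≤ C := by
  have hcard : (0 : ℝ) < s.card := by exact_mod_cast hs.card_pos
  calc ‖finsetAverage T s‖ ≤ (s.card : ℝ)⁻¹ * ∑ i ∈ s, ‖T i‖ := by
        rw [finsetAverage, norm_smul, norm_inv, RCLike.norm_natCast]
        gcongr
        exact norm_sum_le _ _
    _ ≤ (s.card : ℝ)⁻¹ * (s.card * C) := by
        gcongr
        simpa using Finset.sum_le_card_nsmul s _ C hT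
    _ = C := by field_simp

theorem finsetAverage_apply_eq_self (hs : s.Nonempty) {x : E} (hx : ∀ i ∈ s, T i x = x) :
    finsetAverage T s x = x := by
  have hcard : (s.card : 𝕜) ≠ 0 := by exact_mod_cast hs.card_pos.ne'
  rw [finsetAverage_apply, Finset.sum_congr rfl hx, Finset.sum_const, ← Nat.cast_smul_eq_nsmul 𝕜,
    smul_smul, inv_mul_cancel₀ hcard, one_smul]

theorem finsetAverage_apply_mem {p : Submodule 𝕜 E} (hp : ∀ i ∈ s, ∀ x ∈ p, T i x ∈ p) {x : E}
    (hx : x ∈ p) : finsetAverage T s x ∈ p := by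
  rw [finsetAverage_apply]
  exact p.smul_mem _ (p.sum_mem fun i hi => hp i hi x hx)

end Average

/-- The bounded part `E ∩ closedBall x (r + 1)` is compact, so it cannot be at distance zero from
the closed set `W ∩ closedBall x r` without meeting it. -/
theorem Submodule.exists_mem_of_forall_exists_norm_sub_lt {𝕜 F : Type*} [RCLike 𝕜]
    [NormedAddCommGroup F] [NormedSpace 𝕜 F] (E : Submodule 𝕜 F) [FiniteDimensional 𝕜 E]
    {W : Set F} (hW : IsClosed W) {x : F} {r : ℝ}
    (h : ∀ ε > 0, ∃ b ∈ W, ∃ e ∈ E, ‖b - x‖ ≤ r ∧ ‖b - e‖ < ε) :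
    ∃ e ∈ E, e ∈ W ∧ ‖e - x‖ ≤ r := by
  by_contra! hE
  set B := (E : Set F) ∩ closedBall x (r + 1)
  have hB : IsCompact B := by
    refine ((isCompact_closedBall (0 : E) (‖x‖ + (r + 1))).image continuous_subtype_val)
      |>.of_isClosed_subset (E.closed_of_finiteDimensional.inter isClosed_closedBall) ?_
    rintro e ⟨heE, hex⟩
    refine ⟨⟨e, heE⟩, ?_, rfl⟩
    rw [mem_closedBall_iff_norm] at hex
    simpa using (norm_le_norm_add_norm_sub' e x).trans (by linarith [norm_sub_rev e x])
  have hdisj : Disjoint B (W ∩ closedBall x r) := Set.disjoint_left.2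
    fun e ⟨heE, _⟩ ⟨heW, hex⟩ => (hE e heE heW).not_ge (mem_closedBall_iff_norm.1 hex)
  obtain ⟨δ, hδ, hδdisj⟩ := hdisj.exists_cthickenings hB (hW.inter isClosed_closedBall)
  obtain ⟨b, hbW, e, heE, hbx, hbe⟩ := h (min δ 1) (by positivity)
  have heB : e ∈ B := by
    refine ⟨heE, mem_closedBall_iff_norm.2 ?_⟩
    calc ‖e - x‖ ≤ ‖b - e‖ + ‖b - x‖ := by
          rw [norm_sub_rev b e]; exact norm_sub_le_norm_sub_add_norm_sub e b x
      _ ≤ r + 1 := by linarith [min_le_right δ 1]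
  exact hδdisj.ne_of_mem
    (mem_cthickening_of_dist_le b e δ B heB (by rw [dist_eq_norm]; linarith [min_le_left δ 1]))
    (self_subset_cthickening _ ⟨hbW, mem_closedBall_iff_norm.2 hbx⟩) rfl

namespace SmoothRep

variable {G V : Type} [Group G] [NormedAddCommGroup V] [NormedSpace ℂ V]

section Orbits

variable [TopologicalSpace G] [IsTopologicalGroup G] {π : Representation ℂ G V}

theorem IsSmooth.isLocallyConstant (hsmooth : IsSmooth π) (v : V) :
    IsLocallyConstant fun g => π g v := by
  refine (IsLocallyConstant.iff_exists_open _).2 fun g => ⟨(g⁻¹ * ·) ⁻¹' {h | π h v = v},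
    (hsmooth v).preimage (continuous_const_mul _), by simp, fun g' hg' => ?_⟩
  simp only [mem_preimage, mem_ofPred_eq] at hg'
  rw [← mul_inv_cancel_left g g', map_mul, Module.End.mul_apply, hg']

theorem IsSmooth.finite_image (hsmooth : IsSmooth π) {K : Set G} (hK : IsCompact K) (v : V) :
    ((fun g => π g v) '' K).Finite := by
  have := isCompact_iff_compactSpace.mp hK
  rw [image_eq_range]
  exact ((hsmooth.isLocallyConstant v).comp_continuous continuous_subtype_val).range_finite

/-- `s` is a transversal of the finite orbit `K • v`, so the sum is the sum over that orbit. -/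
theorem IsSmooth.exists_finset_sum_mem_fixedSubmodule (hsmooth : IsSmooth π) {K : Subgroup G}
    (hK : IsCompact (K : Set G)) (v : V) :
    ∃ s : Finset G, s.Nonempty ∧ (s : Set G) ⊆ K ∧ ∑ g ∈ s, π g v ∈ fixedSubmodule π K := by
  set O := (fun g => π g v) '' K
  have hO : O.Finite := hsmooth.finite_image hK v
  obtain ⟨t, htK, ht⟩ := exists_subset_bijOn (K : Set G) fun g => π g v
  have htf : t.Finite := Set.Finite.of_finite_image (ht.image_eq ▸ hO) ht.injOn
  have hsum : ∑ g ∈ htf.toFinset, π g v = ∑ᶠ x ∈ O, x := by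
    rw [← finsum_mem_eq_finite_toFinset_sum]
    exact finsum_mem_eq_of_bijOn _ ht fun _ _ => rfl
  refine ⟨htf.toFinset, ?_, by simpa using htK, fun k hk => ?_⟩
  · have : t.Nonempty := by
      rw [← Set.image_nonempty, ht.image_eq]
      exact ⟨v, 1, K.one_mem, by simp⟩
    simpa using this
  have hkO : BijOn (π k) O O := by
    refine ⟨?_, fun x _ y _ hxy => by simpa using congr_arg (π k⁻¹) hxy, fun x hx => ?_⟩
    · rintro _ ⟨g, hg, rfl⟩
      exact ⟨k * g, K.mul_mem hk hg, by simp⟩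
    · obtain ⟨g, hg, rfl⟩ := hx
      exact ⟨π (k⁻¹ * g) v, ⟨k⁻¹ * g, K.mul_mem (K.inv_mem hk) hg, rfl⟩, by simp⟩
  rw [hsum]
  change (π k).toAddMonoidHom _ = _
  rw [AddMonoidHom.map_finsum_mem (fun x : V => x) _ hO]
  exact finsum_mem_eq_of_bijOn (g := fun x : V => x) _ hkO fun _ _ => rfl

theorem IsSmooth.exists_isCompact_isOpen_subgroup_fixing [LocallyCompactSpace G]
    [TotallyDisconnectedSpace G] (hsmooth : IsSmooth π) {U : Set G} (hU : U ∈ 𝓝 1) (v : V) :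
    ∃ K : Subgroup G, IsCompact (K : Set G) ∧ IsOpen (K : Set G) ∧ (K : Set G) ⊆ U ∧
      v ∈ fixedSubmodule π K := by
  obtain ⟨K, hKc, hKo, hKU⟩ := IsTopologicalGroup.exists_isCompact_isOpen_subgroup_subset
    (inter_mem hU ((hsmooth v).mem_nhds (by simp)))
  exact ⟨K, hKc, hKo, fun g hg => (hKU hg).1, fun g hg => (hKU hg).2⟩

end Orbits

section Completion

variable (π : Representation ℂ G V) (πt : G → (Completion V →L[ℂ] Completion V))

theorem map_mul_of_compat (hcompat : ∀ (g : G) (v : V), πt g v = π g v) (g h : G) :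
    πt (g * h) = πt g * πt h := by
  ext x
  refine Completion.induction_on x (isClosed_eq (by fun_prop) (by fun_prop)) fun v => ?_
  simp [hcompat]

theorem norm_le_iff_of_compat (hcompat : ∀ (g : G) (v : V), πt g v = π g v) (g : G) {c : ℝ}
    (hc : 0 ≤ c) : ‖πt g‖ ≤ c ↔ ∀ v : V, ‖π g v‖ ≤ c * ‖v‖ := by
  refine ⟨fun h v => by simpa [hcompat] using (πt g).le_of_opNorm_le h v, fun h => ?_⟩
  refine (πt g).opNorm_le_bound hc fun x => Completion.induction_on x
    (isClosed_le (by fun_prop) (by fun_prop)) fun v => ?_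
  simpa [hcompat] using h v

variable [TopologicalSpace G] [IsTopologicalGroup G]

theorem exists_mem_nhds_one_forall_norm_le_of_compat [BaireSpace G]
    (hcont : ∀ v : V, Continuous fun g : G => π g v)
    (hcompat : ∀ (g : G) (v : V), πt g v = π g v) :
    ∃ U ∈ 𝓝 (1 : G), ∃ C > 0, ∀ g ∈ U, ‖πt g‖ ≤ C := by
  have hclosed (n : ℕ) : IsClosed {g | ‖πt g‖ ≤ n} := by
    have : {g | ‖πt g‖ ≤ n} = ⋂ v : V, {g | ‖π g v‖ ≤ n * ‖v‖} := by
      ext g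
      simp [norm_le_iff_of_compat π πt hcompat g n.cast_nonneg]
    rw [this]
    exact isClosed_iInter fun v => isClosed_le (hcont v).norm continuous_const
  obtain ⟨U, hU, C, hC⟩ :=
    exists_mem_nhds_one_forall_norm_le πt (map_mul_of_compat π πt hcompat) hclosed
  exact ⟨U, hU, max C 1, by positivity, fun g hg => (hC g hg).trans (le_max_left _ _)⟩

theorem exists_finsetAverage_eq_coe (hsmooth : IsSmooth π)
    (hcompat : ∀ (g : G) (v : V), πt g v = π g v) {K : Subgroup G} (hK : IsCompact (K : Set G))
    {p : Submodule ℂ V} (hp : ∀ g : G, ∀ v ∈ p, π g v ∈ p) {u : V} (hu : u ∈ p) :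
    ∃ s : Finset G, s.Nonempty ∧ (s : Set G) ⊆ K ∧
      ∃ a ∈ fixedSubmodule π K ⊓ p, finsetAverage πt s u = a := by
  obtain ⟨s, hs, hsK, hsum⟩ := hsmooth.exists_finset_sum_mem_fixedSubmodule hK u
  refine ⟨s, hs, hsK, (s.card : ℂ)⁻¹ • ∑ g ∈ s, π g u,
    ⟨(fixedSubmodule π K).smul_mem _ hsum, p.smul_mem _ (p.sum_mem fun g _ => hp g u hu)⟩, ?_⟩
  have hcoe := map_sum (Completion.toComplₗᵢ (𝕜 := ℂ) (E := V)) (fun g => π g u) s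
  simp only [Completion.coe_toComplₗᵢ] at hcoe
  simp [finsetAverage_apply, hcompat, hcoe]

end Completion

section Irreducibility

variable [TopologicalSpace G] [IsTopologicalGroup G] [LocallyCompactSpace G]
  [TotallyDisconnectedSpace G] (π : Representation ℂ G V)
  (πt : G → (Completion V →L[ℂ] Completion V))

theorem exists_ne_zero_coe_mem (hsmooth : IsSmooth π) (hadm : IsAdmissible π)
    (hcont : ∀ v : V, Continuous fun g : G => π g v)
    (hcompat : ∀ (g : G) (v : V), πt g v = π g v) {W : Submodule ℂ (Completion V)}
    (hW : IsClosed (W : Set (Completion V))) (hWinv : ∀ g : G, ∀ w ∈ W, πt g w ∈ W)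
    (hW0 : W ≠ ⊥) : ∃ v : V, v ≠ 0 ∧ (v : Completion V) ∈ W := by
  obtain ⟨w, hwW, hw0⟩ := W.exists_mem_ne_zero_of_ne_bot hW0
  have hw : 0 < ‖w‖ := norm_pos_iff.2 hw0
  obtain ⟨U, hU, C, hC0, hC⟩ := exists_mem_nhds_one_forall_norm_le_of_compat π πt hcont hcompat
  obtain ⟨v₀, hv₀⟩ := Completion.denseRange_coe.exists_dist_lt w
    (ε := ‖w‖ / (2 * (C + 1))) (by positivity)
  obtain ⟨K, hKc, hKo, hKU, hv₀K⟩ := hsmooth.exists_isCompact_isOpen_subgroup_fixing hU v₀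
  have := hadm K hKc hKo
  have happrox : ∀ ε > 0, ∃ b ∈ W,
      ∃ e ∈ (fixedSubmodule π K).map (Completion.toComplₗᵢ (𝕜 := ℂ)).toLinearMap,
        ‖b - w‖ ≤ ‖w‖ / 2 ∧ ‖b - e‖ < ε := by
    intro ε hε
    obtain ⟨u, hu⟩ := Completion.denseRange_coe.exists_dist_lt w (ε := ε / C) (by positivity)
    obtain ⟨s, hs, hsK, a, ha, has⟩ := exists_finsetAverage_eq_coe π πt hsmooth hcompat hKc
      (p := ⊤) (fun _ _ _ => trivial) (Submodule.mem_top (x := u))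
    set A := finsetAverage πt s
    have hA : ‖A‖ ≤ C := norm_finsetAverage_le hs fun g hg => hC g (hKU (hsK hg))
    have hAv₀ : A v₀ = v₀ :=
      finsetAverage_apply_eq_self hs fun g hg => by rw [hcompat, hv₀K g (hsK hg)]
    rw [dist_eq_norm] at hv₀ hu
    refine ⟨A w, finsetAverage_apply_mem (fun g _ => hWinv g) hwW, a, ⟨a, ha.1, rfl⟩, ?_, ?_⟩
    · calc ‖A w - w‖ = ‖A (w - v₀) - (w - v₀)‖ := by
            rw [map_sub, hAv₀, sub_sub_sub_cancel_right]
        _ ≤ C * ‖w - v₀‖ + ‖w - v₀‖ :=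
          (norm_sub_le _ _).trans (by gcongr; exact A.le_of_opNorm_le hA _)
        _ = (C + 1) * ‖w - v₀‖ := by ring
        _ ≤ ‖w‖ / 2 := by rw [lt_div_iff₀ (by positivity)] at hv₀; linarith
    · calc ‖A w - a‖ = ‖A (w - u)‖ := by rw [map_sub, has]
        _ ≤ C * ‖w - u‖ := A.le_of_opNorm_le hA _
        _ < ε := by rwa [lt_div_iff₀' hC0] at hu
  obtain ⟨_, ⟨v, -, rfl⟩, hvW, hvw⟩ :=
    Submodule.exists_mem_of_forall_exists_norm_sub_lt _ hW happrox
  refine ⟨v, ?_, hvW⟩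
  rintro rfl
  simp only [map_zero, zero_sub, norm_neg] at hvw
  linarith

theorem mem_of_coe_mem_topologicalClosure (hsmooth : IsSmooth π) (hadm : IsAdmissible π)
    (hcont : ∀ v : V, Continuous fun g : G => π g v)
    (hcompat : ∀ (g : G) (v : V), πt g v = π g v) {U : Submodule ℂ V}
    (hU : ∀ g : G, ∀ u ∈ U, π g u ∈ U) {v : V}
    (hv : (v : Completion V) ∈ closure ((↑) '' (U : Set V))) : v ∈ U := by
  obtain ⟨N, hN, C, hC0, hC⟩ := exists_mem_nhds_one_forall_norm_le_of_compat π πt hcont hcompat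
  obtain ⟨K, hKc, hKo, hKN, hvK⟩ := hsmooth.exists_isCompact_isOpen_subgroup_fixing hN v
  have := hadm K hKc hKo
  suffices v ∈ closure ((fixedSubmodule π K ⊓ U : Submodule ℂ V) : Set V) from
    ((Submodule.closed_of_finiteDimensional _).closure_subset this).2
  rw [Metric.mem_closure_iff]
  intro ε hε
  rw [Metric.mem_closure_iff] at hv
  obtain ⟨_, ⟨u, hu, rfl⟩, hvu⟩ := hv (ε / C) (by positivity)
  obtain ⟨s, hs, hsK, a, ha, has⟩ := exists_finsetAverage_eq_coe π πt hsmooth hcompat hKc hU hu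
  set A := finsetAverage πt s
  have hA : ‖A‖ ≤ C := norm_finsetAverage_le hs fun g hg => hC g (hKN (hsK hg))
  have hAv : A v = v :=
    finsetAverage_apply_eq_self hs fun g hg => by rw [hcompat, hvK g (hsK hg)]
  refine ⟨a, ha, ?_⟩
  rw [dist_eq_norm] at hvu
  calc dist v a = ‖A (v - u)‖ := by
        rw [map_sub, hAv, has, ← Completion.dist_eq, dist_eq_norm]
    _ ≤ C * ‖(v : Completion V) - u‖ := A.le_of_opNorm_le hA _
    _ < ε := by rwa [lt_div_iff₀' hC0] at hvu

def IsTopologicallyIrreducible {F : Type*} [NormedAddCommGroup F] [NormedSpace ℂ F]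
    (ρ : G → F →L[ℂ] F) : Prop :=
  ∀ W : Submodule ℂ F, IsClosed (W : Set F) → (∀ g : G, ∀ w ∈ W, ρ g w ∈ W) → W = ⊥ ∨ W = ⊤

theorem isTopologicallyIrreducible_of_algIrreducible (hsmooth : IsSmooth π)
    (hadm : IsAdmissible π) (hcont : ∀ v : V, Continuous fun g : G => π g v)
    (hcompat : ∀ (g : G) (v : V), πt g v = π g v) (halg : AlgIrreducible π) :
    IsTopologicallyIrreducible πt := by
  intro W hW hWinv
  refine or_iff_not_imp_left.2 fun hW0 => ?_
  obtain ⟨v, hv0, hvW⟩ := exists_ne_zero_coe_mem π πt hsmooth hadm hcont hcompat hW hWinv hW0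
  obtain h | h := halg (W.comap (Completion.toComplₗᵢ (𝕜 := ℂ)).toLinearMap)
    fun g u hu => by simpa [hcompat] using hWinv g _ hu
  · exact absurd ((Submodule.mem_bot ℂ).1 (h ▸ hvW : v ∈ (⊥ : Submodule ℂ V))) hv0
  refine Submodule.eq_top_iff'.2 fun x => hW.closure_subset_iff.2 ?_ (Completion.denseRange_coe x)
  rintro _ ⟨u, rfl⟩
  exact (h ▸ Submodule.mem_top : u ∈ W.comap (Completion.toComplₗᵢ (𝕜 := ℂ)).toLinearMap)

theorem algIrreducible_of_isTopologicallyIrreducible (hsmooth : IsSmooth π)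
    (hadm : IsAdmissible π) (hcont : ∀ v : V, Continuous fun g : G => π g v)
    (hcompat : ∀ (g : G) (v : V), πt g v = π g v) (htop : IsTopologicallyIrreducible πt) :
    AlgIrreducible π := by
  intro U hU
  refine or_iff_not_imp_left.2 fun hU0 => Submodule.eq_top_iff'.2 fun v =>
    mem_of_coe_mem_topologicalClosure π πt hsmooth hadm hcont hcompat hU ?_
  set W := (U.map (Completion.toComplₗᵢ (𝕜 := ℂ)).toLinearMap).topologicalClosure
  have hWinv : ∀ g : G, ∀ w ∈ W, πt g w ∈ W := by
    refine fun g w hw => map_mem_closure (πt g).continuous hw ?_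
    rintro _ ⟨u, hu, rfl⟩
    exact ⟨π g u, hU g u hu, by simp [hcompat]⟩
  obtain h | h := htop W (Submodule.isClosed_topologicalClosure _) hWinv
  · obtain ⟨u, hu, hu0⟩ := U.exists_mem_ne_zero_of_ne_bot hU0
    have huW : (u : Completion V) ∈ W := Submodule.le_topologicalClosure _ ⟨u, hu, rfl⟩
    rw [h, Submodule.mem_bot, ← Completion.coe_zero] at huW
    exact absurd (Completion.coe_injective V huW) hu0
  · have hvW : (v : Completion V) ∈ (W : Set (Completion V)) := h ▸ Submodule.mem_top
    rwa [Submodule.topologicalClosure_coe, Submodule.map_coe] at hvW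

end Irreducibility

variable {G : Type} [Group G] [TopologicalSpace G] [IsTopologicalGroup G]
  [LocallyCompactSpace G] [TotallyDisconnectedSpace G]
  {V : Type} [NormedAddCommGroup V] [NormedSpace ℂ V]

/-- **Proposition.** Let `G` be a tdlc group and `(π, V)` a smooth admissible representation of
`G`, continuous with respect to a norm on `V`, and let `(π̃, Ṽ)` be the extension of `π` to the
completion `Ṽ` of `V`. Then every non-zero closed `G`-invariant subspace of `Ṽ` intersects
`V` non-trivially, and `(π, V)` is algebraically irreducible if and only if `(π̃, Ṽ)` is
topologically irreducible. -/
theorem completion_invariant_subspaces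
    (π : Representation ℂ G V)
    (hsmooth : IsSmooth π) (hadm : IsAdmissible π)
    (hcont : ∀ v : V, Continuous fun g : G => π g v)
    (πt : G → (Completion V →L[ℂ] Completion V))
    (hcompat : ∀ (g : G) (v : V), πt g (↑v : Completion V) = (↑(π g v) : Completion V)) :
    (∀ W : Submodule ℂ (Completion V), IsClosed (W : Set (Completion V)) →
        (∀ g : G, ∀ w ∈ W, πt g w ∈ W) → W ≠ ⊥ →
        ∃ v : V, v ≠ 0 ∧ (↑v : Completion V) ∈ W) ∧
    (AlgIrreducible π ↔
      ∀ W : Submodule ℂ (Completion V), IsClosed (W : Set (Completion V)) →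
        (∀ g : G, ∀ w ∈ W, πt g w ∈ W) → W = ⊥ ∨ W = ⊤) :=
  ⟨fun _ hW hWinv hW0 => exists_ne_zero_coe_mem π πt hsmooth hadm hcont hcompat hW hWinv hW0,
    isTopologicallyIrreducible_of_algIrreducible π πt hsmooth hadm hcont hcompat,
    algIrreducible_of_isTopologicallyIrreducible π πt hsmooth hadm hcont hcompat⟩

end SmoothRep
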